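/- arXiv:1907.03797 — 3 statements merged into one kernel-verified Lean document; each statement's English description precedes it below -/
import Mathlib

section
/- In a finite simple graph, if a vertex coloring has defect at most d (each vertex has at most d neighbors of its own color), then in a graph with neighborhood independence at most θ (every vertex's neighborhood contains no independent set of size more than θ), for every color x and every vertex v, the number of neighbors of v with color x is at most θ(d+1). -/
/-! A maximal independent set `S` among the neighbours of `v` of colour `x` dominates them, and each
`s ∈ S` dominates at most `d + 1` vertices of its own colour `x` (itself and its at most `d`
monochromatic neighbours). Since `S` is an independent set in the neighbourhood of `v`,
`|S| ≤ θ`. -/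

namespace SimpleGraph

variable {V : Type*} (G : SimpleGraph V) [DecidableEq V]

theorem exists_isIndepSet_subset_dominating (T : Finset V) :
    ∃ S ⊆ T, G.IsIndepSet (S : Set V) ∧ ∀ t ∈ T, t ∈ S ∨ ∃ s ∈ S, G.Adj s t := by
  classical
  obtain ⟨S, hS⟩ :=
    (T.powerset.filter fun S : Finset V => G.IsIndepSet (S : Set V)).exists_maximal ⟨∅, by simp⟩
  simp only [Finset.mem_filter, Finset.mem_powerset] at hS
  obtain ⟨⟨hST, hSind⟩, hmax⟩ := hS
  refine ⟨S, hST, hSind, fun t ht => or_iff_not_imp_left.2 fun htS => ?_⟩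
  by_contra! hfar
  have hins : G.IsIndepSet (insert t S : Set V) :=
    hSind.insert fun s hs _ => ⟨fun hadj => hfar s hs hadj.symm, hfar s hs⟩
  exact htS <| hmax ⟨Finset.insert_subset ht hST, by simpa using hins⟩
    (Finset.subset_insert t S) (Finset.mem_insert_self t S)

variable [Fintype V] [DecidableRel G.Adj]

theorem card_le_card_mul_of_dominating {c : V → ℕ} {d x : ℕ}
    (hdef : ∀ v, ((G.neighborFinset v).filter fun u => c u = c v).card ≤ d)
    {S T : Finset V} (hT : ∀ t ∈ T, c t = x) (hST : S ⊆ T)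
    (hdom : ∀ t ∈ T, t ∈ S ∨ ∃ s ∈ S, G.Adj s t) :
    T.card ≤ S.card * (d + 1) := by
  let closedNbhd s := insert s ((G.neighborFinset s).filter fun u => c u = c s)
  have hcover : T ⊆ S.biUnion closedNbhd := by
    intro t ht
    rw [Finset.mem_biUnion]
    rcases hdom t ht with htS | ⟨s, hs, hadj⟩
    · exact ⟨t, htS, Finset.mem_insert_self t _⟩
    · refine ⟨s, hs, Finset.mem_insert_of_mem ?_⟩
      simp [hadj, hT t ht, hT s (hST hs)]
  calc T.card ≤ (S.biUnion closedNbhd).card := Finset.card_le_card hcover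
    _ ≤ S.card * (d + 1) := Finset.card_biUnion_le_card_mul S closedNbhd (d + 1) fun s _ =>
        (Finset.card_insert_le _ _).trans (Nat.succ_le_succ (hdef s))

end SimpleGraph

/-- In a graph with neighborhood independence at most θ, if a coloring has defect at most d,
then every vertex has at most θ(d+1) neighbors of any fixed color x. -/
theorem stmt_0 {V : Type*} [Fintype V] [DecidableEq V] (G : SimpleGraph V)
    [DecidableRel G.Adj] (c : V → ℕ) (d θ : ℕ)
    (hdef : ∀ v : V, ((G.neighborFinset v).filter (fun u => c u = c v)).card ≤ d)
    (hθ : ∀ v : V, ∀ S : Finset V, S ⊆ G.neighborFinset v →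
      (∀ u ∈ S, ∀ w ∈ S, u ≠ w → ¬ G.Adj u w) → S.card ≤ θ) :
    ∀ (x : ℕ) (v : V),
      ((G.neighborFinset v).filter (fun u => c u = x)).card ≤ θ * (d + 1) := by
  intro x v
  set T := (G.neighborFinset v).filter fun u => c u = x
  obtain ⟨S, hST, hSind, hdom⟩ := G.exists_isIndepSet_subset_dominating T
  calc T.card ≤ S.card * (d + 1) :=
        G.card_le_card_mul_of_dominating hdef (fun t ht => (Finset.mem_filter.1 ht).2) hST hdom
    _ ≤ θ * (d + 1) :=
        Nat.mul_le_mul_right _ (hθ v S (hST.trans (Finset.filter_subset _ _)) hSind)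
end

section
/- If the edges of a finite graph G can be oriented so that every vertex has out-degree at most k, then G has chromatic number at most 2k+1. -/
/-!
Every vertex set `s` spans at most `k * #s` oriented edges, since each vertex has out-degree at
most `k`; every edge inside `s` is oriented one way or the other, so the degrees inside `s` sum to
at most `2 * k * #s` and some vertex of `s` has at most `2 * k` neighbours in `s`. A graph in which
every nonempty vertex set has such a vertex is colored greedily with `2 * k + 1` colors: remove
that vertex, color the rest, and give it a color missed by its at most `2 * k` neighbours.
-/

open Finset

namespace SimpleGraph

variable {V : Type*} (G : SimpleGraph V) [DecidableRel G.Adj]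

def IsDegenerate (d : ℕ) : Prop :=
  ∀ s : Finset V, s.Nonempty → ∃ v ∈ s, #{w ∈ s | G.Adj v w} ≤ d

variable {G}

theorem IsDegenerate.exists_coloringOn [DecidableEq V] {d : ℕ} (h : G.IsDegenerate d)
    (s : Finset V) : ∃ C : V → Fin (d + 1), ∀ u ∈ s, ∀ w ∈ s, G.Adj u w → C u ≠ C w := by
  induction s using Finset.strongInduction with
  | H s ih =>
  rcases s.eq_empty_or_nonempty with rfl | hs
  · exact ⟨0, by simp⟩
  obtain ⟨v, hv, hdeg⟩ := h s hs
  obtain ⟨C, hC⟩ := ih (s.erase v) (erase_ssubset hv)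
  obtain ⟨c, -, hc⟩ : ∃ c ∈ univ, c ∉ image C {w ∈ s.erase v | G.Adj v w} := by
    refine exists_mem_notMem_of_card_lt_card ?_
    calc #(image C {w ∈ s.erase v | G.Adj v w})
        ≤ #{w ∈ s.erase v | G.Adj v w} := card_image_le
      _ ≤ #{w ∈ s | G.Adj v w} := card_le_card (filter_subset_filter _ (erase_subset v s))
      _ < #(univ : Finset (Fin (d + 1))) := by simpa using Nat.lt_succ_of_le hdeg
  have hc' : ∀ w ∈ s, w ≠ v → G.Adj v w → C w ≠ c := fun w hw hwv hvw hwc =>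
    hc (mem_image.2 ⟨w, mem_filter.2 ⟨mem_erase.2 ⟨hwv, hw⟩, hvw⟩, hwc⟩)
  refine ⟨Function.update C v c, fun u hu w hw huw => ?_⟩
  by_cases huv : u = v <;> by_cases hwv : w = v
  · exact (huw.ne (huv.trans hwv.symm)).elim
  · subst huv; simpa [hwv] using (hc' w hw hwv huw).symm
  · subst hwv; simpa [huv] using hc' u hu huv huw.symm
  · simpa [huv, hwv] using hC u (mem_erase.2 ⟨huv, hu⟩) w (mem_erase.2 ⟨hwv, hw⟩) huw

theorem IsDegenerate.colorable [Fintype V] {d : ℕ} (h : G.IsDegenerate d) :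
    G.Colorable (d + 1) := by
  classical
  obtain ⟨C, hC⟩ := h.exists_coloringOn univ
  exact ⟨Coloring.mk C fun huw => hC _ (mem_univ _) _ (mem_univ _) huw⟩

theorem isDegenerate_two_mul_of_orientation [Finite V] {o : V → V → Prop}
    (ho : ∀ u v, G.Adj u v → o u v ∨ o v u) {k : ℕ} (hout : ∀ v, {w | o v w}.ncard ≤ k) :
    G.IsDegenerate (2 * k) := by
  classical
  intro s hs
  have hout_s (v : V) : #{w ∈ s | o v w} ≤ k := by
    rw [← Set.ncard_coe_finset]
    exact (Set.ncard_le_ncard (fun w hw => (mem_filter.1 hw).2)).trans (hout v)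
  have hadj (v : V) : #{w ∈ s | G.Adj v w} ≤ #{w ∈ s | o v w} + #{w ∈ s | o w v} := by
    refine (card_le_card fun w hw => ?_).trans (card_union_le _ _)
    rw [mem_filter] at hw
    rw [mem_union, mem_filter, mem_filter]
    exact (ho v w hw.2).imp (⟨hw.1, ·⟩) (⟨hw.1, ·⟩)
  refine exists_le_of_sum_le hs ?_
  calc ∑ v ∈ s, #{w ∈ s | G.Adj v w}
      ≤ ∑ v ∈ s, (#{w ∈ s | o v w} + #{w ∈ s | o w v}) := sum_le_sum fun v _ => hadj v
    _ = 2 * ∑ v ∈ s, #{w ∈ s | o v w} := by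
      have hin : ∑ v ∈ s, #{w ∈ s | o w v} = ∑ v ∈ s, #{w ∈ s | o v w} :=
        (sum_card_bipartiteAbove_eq_sum_card_bipartiteBelow (r := o)).symm
      rw [sum_add_distrib, hin, two_mul]
    _ ≤ ∑ v ∈ s, 2 * k := by rw [← mul_sum]; gcongr with v; exact hout_s v

end SimpleGraph

theorem stmt_6_general {V : Type*} [Fintype V] (G : SimpleGraph V) (k : ℕ)
    (o : V → V → Prop)
    (ho2 : ∀ u v, G.Adj u v → (o u v ∨ o v u))
    (hout : ∀ v, {w | o v w}.ncard ≤ k) :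
    G.chromaticNumber ≤ (2 * k + 1 : ℕ) := by
  classical
  exact (G.isDegenerate_two_mul_of_orientation ho2 hout).colorable.chromaticNumber_le

/-- If the edges of G can be oriented so that every vertex has out-degree at most k,
then G has chromatic number at most 2k+1. -/
theorem stmt_6 {V : Type*} [Fintype V] (G : SimpleGraph V) (k : ℕ)
    (o : V → V → Prop)
    (ho1 : ∀ u v, o u v → G.Adj u v)
    (ho2 : ∀ u v, G.Adj u v → (o u v ∨ o v u))
    (ho3 : ∀ u v, o u v → ¬ o v u)
    (hout : ∀ v, {w | o v w}.ncard ≤ k) :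
    G.chromaticNumber ≤ (2 * k + 1 : ℕ) :=
  stmt_6_general G k o ho2 hout
end

section
/- If every subgraph of a finite graph G on k vertices has at most a(k−1) edges, then G admits an acyclic edge orientation in which every vertex has out-degree at most 2a−1. -/
/-!
The density condition forces every nonempty vertex set `S` to contain a vertex with at most
`2a - 1` neighbours in `S`: the degrees within `S` sum to `2 |E(S)| ≤ 2a (|S| - 1) < 2a |S|`.
Removing such vertices one at a time gives a degeneracy ordering, and orienting every edge from
the earlier to the later endpoint gives an acyclic orientation with out-degrees at most `2a - 1`.
-/

open Finset

open scoped Classical in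
theorem sum_card_filter_adj_eq_two_mul_card_edges_within {V : Type*} [Fintype V] [DecidableEq V]
    (G : SimpleGraph V) [DecidableRel G.Adj] (S : Finset V) :
    ∑ v ∈ S, #(S.filter (G.Adj v)) = 2 * #(G.edgeFinset.filter (fun e => ∀ x ∈ e, x ∈ S)) := by
  let H := ((⊤ : G.Subgraph).induce (S : Set V)).spanningCoe
  have hdeg_mem : ∀ v ∈ S, H.degree v = #(S.filter (G.Adj v)) := by
    intro v hv
    rw [← SimpleGraph.card_neighborFinset_eq_degree]
    congr 1; ext w; simp [H, hv]
  have hdeg_not_mem : ∀ v ∉ S, H.degree v = 0 := by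
    intro v hv
    rw [← SimpleGraph.card_neighborFinset_eq_degree, Finset.card_eq_zero]
    ext w; simp [H, hv]
  have hedges : H.edgeFinset = G.edgeFinset.filter (fun e => ∀ x ∈ e, x ∈ S) := by
    ext e; induction e using Sym2.ind; simp [H]; tauto
  rw [← hedges, ← H.sum_degrees_eq_twice_card_edges,
    ← Finset.sum_subset (Finset.subset_univ S) (fun v _ hv => hdeg_not_mem v hv)]
  exact (Finset.sum_congr rfl hdeg_mem).symm

lemma two_mul_mul_sub_one_lt {a n : ℕ} (hn : 1 ≤ n) :
    2 * (a * (n - 1)) < (2 * a - 1 + 1) * n := by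
  obtain ⟨m, rfl⟩ := Nat.exists_eq_add_of_le' hn
  rcases Nat.eq_zero_or_pos a with rfl | ha
  · simp
  · rw [Nat.sub_add_cancel (by omega)]
    simp only [Nat.add_sub_cancel]
    nlinarith

open scoped Classical in
theorem exists_card_filter_adj_le_of_density {V : Type*} [Fintype V] [DecidableEq V]
    (G : SimpleGraph V) [DecidableRel G.Adj] (a : ℕ)
    (hdens : ∀ S : Finset V, S.Nonempty →
      (G.edgeFinset.filter (fun e => ∀ x ∈ e, x ∈ S)).card ≤ a * (S.card - 1))
    {S : Finset V} (hS : S.Nonempty) :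
    ∃ v ∈ S, #(S.filter (G.Adj v)) ≤ 2 * a - 1 := by
  by_contra! hdeg
  have hlower : (2 * a - 1 + 1) * #S ≤ ∑ v ∈ S, #(S.filter (G.Adj v)) := by
    rw [mul_comm, ← smul_eq_mul, ← Finset.sum_const]
    exact Finset.sum_le_sum hdeg
  rw [sum_card_filter_adj_eq_two_mul_card_edges_within] at hlower
  have := two_mul_mul_sub_one_lt (a := a) hS.card_pos
  have := hdens S hS
  omega

theorem exists_ranking_of_degenerate {V : Type*} [DecidableEq V] (G : SimpleGraph V)
    [DecidableRel G.Adj]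
    (d : ℕ) (hdeg : ∀ S : Finset V, S.Nonempty → ∃ v ∈ S, #(S.filter (G.Adj v)) ≤ d)
    (S : Finset V) :
    ∃ r : V → ℕ, Set.InjOn r S ∧ ∀ v ∈ S, #(S.filter (fun w => G.Adj v w ∧ r v < r w)) ≤ d := by
  induction S using Finset.strongInduction with
  | H S ih =>
  rcases S.eq_empty_or_nonempty with rfl | hS
  · exact ⟨fun _ => 0, by simp, by simp⟩
  obtain ⟨v, hv, hv_deg⟩ := hdeg S hS
  obtain ⟨r, hr_inj, hr_deg⟩ := ih (S.erase v) (Finset.erase_ssubset hv)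
  -- `v` goes first, so all its neighbours in `S` count as forward but nothing else changes.
  let r' : V → ℕ := fun w => if w = v then 0 else r w + 1
  refine ⟨r', ?_, fun u hu => ?_⟩
  · intro x hx y hy h
    by_cases hxv : x = v <;> by_cases hyv : y = v <;> simp [r', hxv, hyv] at h ⊢
    exact hr_inj (by simp [hxv, hx]) (by simp [hyv, hy]) h
  · by_cases huv : u = v
    · subst huv
      exact (Finset.card_le_card (Finset.monotone_filter_right S fun _ _ h => h.1)).trans hv_deg
    · convert hr_deg u (Finset.mem_erase.mpr ⟨huv, hu⟩) using 2
      ext w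
      by_cases hwv : w = v <;> simp [r', huv, hwv]

open scoped Classical in
theorem stmt_9_general {V : Type*} [Fintype V] [DecidableEq V] (G : SimpleGraph V)
    [DecidableRel G.Adj] (a : ℕ)
    (hdens : ∀ S : Finset V, S.Nonempty →
      (G.edgeFinset.filter (fun e => ∀ x ∈ e, x ∈ S)).card ≤ a * (S.card - 1)) :
    ∃ o : V → V → Prop,
      (∀ u v, o u v → G.Adj u v) ∧
      (∀ u v, G.Adj u v → (o u v ∨ o v u)) ∧
      (∀ u v, o u v → ¬ o v u) ∧
      (∀ v, ¬ Relation.TransGen o v v) ∧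
      (∀ v, {w | o v w}.ncard ≤ 2 * a - 1) := by
  obtain ⟨r, hr_inj, hr_deg⟩ := exists_ranking_of_degenerate G (2 * a - 1)
    (fun _ hS => exists_card_filter_adj_le_of_density G a hdens hS) univ
  refine ⟨fun u v => G.Adj u v ∧ r u < r v, fun u v h => h.1, fun u v huv => ?_,
    fun u v h h' => (h.2.trans h'.2).false, fun v hv => ?_, fun v => ?_⟩
  · rcases lt_trichotomy (r u) (r v) with h | h | h
    · exact .inl ⟨huv, h⟩
    · exact absurd (hr_inj (by simp) (by simp) h) huv.ne
    · exact .inr ⟨huv.symm, h⟩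
  · have hlt := Relation.TransGen.lift (p := (· < ·)) r (fun _ _ h => h.2) _ _ hv
    rw [Relation.transGen_eq_self] at hlt
    exact lt_irrefl _ hlt
  · simpa [Set.ncard_eq_toFinset_card'] using hr_deg v (mem_univ v)

open scoped Classical in
/-- Under the Nash-Williams density condition (every vertex subset S spans at most
a(|S|-1) edges), G admits an acyclic edge orientation with out-degree at most 2a-1. -/
theorem stmt_9 {V : Type*} [Fintype V] [DecidableEq V] (G : SimpleGraph V)
    [DecidableRel G.Adj] (a : ℕ) (ha : 1 ≤ a)
    (hdens : ∀ S : Finset V, S.Nonempty →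
      (G.edgeFinset.filter (fun e => ∀ x ∈ e, x ∈ S)).card ≤ a * (S.card - 1)) :
    ∃ o : V → V → Prop,
      (∀ u v, o u v → G.Adj u v) ∧
      (∀ u v, G.Adj u v → (o u v ∨ o v u)) ∧
      (∀ u v, o u v → ¬ o v u) ∧
      (∀ v, ¬ Relation.TransGen o v v) ∧
      (∀ v, {w | o v w}.ncard ≤ 2 * a - 1) :=
  stmt_9_general G a hdens
end
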